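/- Let d ≥ 1 and let P : ℝ^d × ℝ^d → ℝ be any polynomial function. Then there exists a unique polynomial function u : ℝ^d × ℝ^d → ℝ, of degree at most the degree of P, such that u(ξ,y) − ⟨ξ + y, ∇_ξu(ξ,y)⟩ + ⟨6ξ + 4y, ∇_yu(ξ,y)⟩ = P(ξ,y) for all ξ, y ∈ ℝ^d. -/

import Mathlib

/-- `i`-th component of the gradient of `u(ξ,y)` with respect to `ξ`. -/
noncomputable def gradFst {d : ℕ} (u : (Fin d → ℝ) → (Fin d → ℝ) → ℝ)
    (ξ y : Fin d → ℝ) (i : Fin d) : ℝ :=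
  fderiv ℝ (fun ξ' => u ξ' y) ξ (Pi.single i 1)

/-- `i`-th component of the gradient of `u(ξ,y)` with respect to `y`. -/
noncomputable def gradSnd {d : ℕ} (u : (Fin d → ℝ) → (Fin d → ℝ) → ℝ)
    (ξ y : Fin d → ℝ) (i : Fin d) : ℝ :=
  fderiv ℝ (fun y' => u ξ y') y (Pi.single i 1)

/-- The polynomial function on `ℝ^d × ℝ^d` given by a multivariate polynomial in the
coordinates of `ξ` (indexed by `Sum.inl`) and `y` (indexed by `Sum.inr`). -/
noncomputable def polyFun {d : ℕ} (Q : MvPolynomial (Fin d ⊕ Fin d) ℝ)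
    (ξ y : Fin d → ℝ) : ℝ :=
  MvPolynomial.eval (Sum.elim ξ y) Q

open MvPolynomial

noncomputable section Stmt12Aux

namespace Stmt12Aux

set_option linter.unusedSectionVars false

/-! ### Analytic part: the derivative of polynomial evaluation -/

variable {σ : Type*} [Fintype σ] [DecidableEq σ]

def evalGradCLM (p : MvPolynomial σ ℝ) (x : σ → ℝ) : (σ → ℝ) →L[ℝ] ℝ :=
  ∑ j, MvPolynomial.eval x (pderiv j p) • ContinuousLinearMap.proj j

lemma evalGradCLM_apply (p : MvPolynomial σ ℝ) (x v : σ → ℝ) :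
    evalGradCLM p x v = ∑ j, MvPolynomial.eval x (pderiv j p) * v j := by
  simp [evalGradCLM]

lemma hasFDerivAt_mvpoly_eval (p : MvPolynomial σ ℝ) (x : σ → ℝ) :
    HasFDerivAt (fun x => MvPolynomial.eval x p) (evalGradCLM p x) x := by
  induction p using MvPolynomial.induction_on with
  | C a =>
      have : evalGradCLM (C a : MvPolynomial σ ℝ) x = 0 := by
        ext v; simp [evalGradCLM_apply]
      rw [this]
      simpa using hasFDerivAt_const a x
  | add p q hp hq =>
      have : evalGradCLM (p + q) x = evalGradCLM p x + evalGradCLM q x := by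
        ext v; simp [evalGradCLM_apply, map_add, add_mul, Finset.sum_add_distrib]
      rw [this]; exact (show (fun x => MvPolynomial.eval x (p + q)) = (fun x => MvPolynomial.eval x p) + (fun x => MvPolynomial.eval x q) by funext y; simp) ▸ hp.add hq
  | mul_X p j hp =>
      have hj : HasFDerivAt (fun x : σ → ℝ => x j)
          (ContinuousLinearMap.proj j : (σ → ℝ) →L[ℝ] ℝ) x := by
        exact (ContinuousLinearMap.proj (R := ℝ) (φ := fun _ : σ => ℝ) j).hasFDerivAt (x := x)
      have := hp.mul hj
      have heq : evalGradCLM (p * X j) x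
          = MvPolynomial.eval x p • (ContinuousLinearMap.proj j : (σ → ℝ) →L[ℝ] ℝ)
            + (x j) • evalGradCLM p x := by
        ext v
        simp only [evalGradCLM_apply, ContinuousLinearMap.add_apply,
          ContinuousLinearMap.smul_apply, ContinuousLinearMap.proj_apply, smul_eq_mul]
        have : ∀ k, MvPolynomial.eval x (pderiv k (p * X j)) * v k
            = MvPolynomial.eval x (pderiv k p) * x j * v k
              + MvPolynomial.eval x p * (if j = k then v k else 0) := by
          intro k
          rw [pderiv_mul, pderiv_X]
          rcases eq_or_ne j k with h | h
          · subst h; simp [Pi.single_apply]; ring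
          · simp [Pi.single_apply, h.symm]
            intro hc; exact absurd hc h
        rw [Finset.sum_congr rfl fun k _ => this k, Finset.sum_add_distrib]
        have : (∑ k : σ, MvPolynomial.eval x p * if j = k then v k else 0)
            = MvPolynomial.eval x p * v j := by
          rw [← Finset.mul_sum, Finset.sum_ite_eq Finset.univ j v]; simp
        rw [this]
        simp only [Finset.mul_sum]
        rw [add_comm]
        congr 1
        exact Finset.sum_congr rfl fun k _ => by ring
      rw [heq]
      exact (show (fun x => MvPolynomial.eval x (p * X j)) = (fun x => MvPolynomial.eval x p) * (fun x : σ → ℝ => x j) by funext y; simp) ▸ this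

/-- `mkDerivation` as a sum of partial derivatives. -/
lemma mkDerivation_eq_sum (f : σ → MvPolynomial σ ℝ) (p : MvPolynomial σ ℝ) :
    mkDerivation ℝ f p = ∑ j, f j * pderiv j p := by
  induction p using MvPolynomial.induction_on with
  | C a =>
      rw [show (C a : MvPolynomial σ ℝ) = algebraMap ℝ _ a from rfl,
        Derivation.map_algebraMap]
      simp [pderiv_C]
  | add p q hp hq =>
      simp [map_add, hp, hq, mul_add, Finset.sum_add_distrib]
  | mul_X p j hp =>
      rw [Derivation.leibniz, hp, mkDerivation_X]
      have : ∀ k, f k * pderiv k (p * X j)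
          = f k * pderiv k p * X j + f k * p * (if j = k then 1 else 0) := by
        intro k
        rw [pderiv_mul, pderiv_X, Pi.single_apply]
        rcases eq_or_ne j k with h | h
        · subst h; simp; ring
        · simp [h, Ne.symm h]; ring
      rw [Finset.sum_congr rfl fun k _ => this k, Finset.sum_add_distrib]
      have h2 : (∑ k : σ, f k * p * if j = k then 1 else 0) = f j * p := by
        simp [mul_ite]
      rw [h2, smul_eq_mul, smul_eq_mul, ← Finset.sum_mul]
      ring

/-! ### The fixed setting -/

variable {d : ℕ}

abbrev Rd (d : ℕ) := MvPolynomial (Fin d ⊕ Fin d) ℝ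

/-- `v ↦ Sum.elim v 0` as a continuous linear map. -/
def inlCLM (d : ℕ) : (Fin d → ℝ) →L[ℝ] ((Fin d ⊕ Fin d) → ℝ) :=
  LinearMap.toContinuousLinearMap
    { toFun := fun v => Sum.elim v 0
      map_add' := by intro a b; ext (j | j) <;> simp
      map_smul' := by intro c a; ext (j | j) <;> simp }

def inrCLM (d : ℕ) : (Fin d → ℝ) →L[ℝ] ((Fin d ⊕ Fin d) → ℝ) :=
  LinearMap.toContinuousLinearMap
    { toFun := fun v => Sum.elim 0 v
      map_add' := by intro a b; ext (j | j) <;> simp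
      map_smul' := by intro c a; ext (j | j) <;> simp }

lemma gradFst_polyFun (u : MvPolynomial (Fin d ⊕ Fin d) ℝ) (ξ y : Fin d → ℝ) (i : Fin d) :
    gradFst (polyFun u) ξ y i
      = MvPolynomial.eval (Sum.elim ξ y) (pderiv (Sum.inl i) u) := by
  have h1 : HasFDerivAt (fun ξ' : Fin d → ℝ => inlCLM d ξ' + Sum.elim (0 : Fin d → ℝ) y)
      (inlCLM d) ξ := (inlCLM d).hasFDerivAt.add_const _
  have hfe : (fun ξ' : Fin d → ℝ => Sum.elim ξ' y)
      = fun ξ' : Fin d → ℝ => inlCLM d ξ' + Sum.elim (0 : Fin d → ℝ) y := by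
    funext ξ'; ext (j | j) <;> simp [inlCLM]
  have hinner : HasFDerivAt (fun ξ' : Fin d → ℝ => Sum.elim ξ' y) (inlCLM d) ξ := by
    rw [hfe]; exact h1
  have hcomp := (hasFDerivAt_mvpoly_eval u (Sum.elim ξ y)).comp ξ hinner
  simp only [Function.comp_def] at hcomp
  rw [gradFst]; unfold polyFun; rw [hcomp.fderiv]
  have hv : inlCLM d (Pi.single i 1) = Sum.elim (Pi.single i 1) (0 : Fin d → ℝ) := rfl
  simp only [ContinuousLinearMap.coe_comp', Function.comp_apply, hv, evalGradCLM_apply]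
  rw [Fintype.sum_sum_type]
  simp [Pi.single_apply, Finset.sum_ite_eq']

lemma gradSnd_polyFun (u : MvPolynomial (Fin d ⊕ Fin d) ℝ) (ξ y : Fin d → ℝ) (i : Fin d) :
    gradSnd (polyFun u) ξ y i
      = MvPolynomial.eval (Sum.elim ξ y) (pderiv (Sum.inr i) u) := by
  have h1 : HasFDerivAt (fun y' : Fin d → ℝ => inrCLM d y' + Sum.elim ξ (0 : Fin d → ℝ))
      (inrCLM d) y := (inrCLM d).hasFDerivAt.add_const _
  have hfe : (fun y' : Fin d → ℝ => Sum.elim ξ y')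
      = fun y' : Fin d → ℝ => inrCLM d y' + Sum.elim ξ (0 : Fin d → ℝ) := by
    funext y'; ext (j | j) <;> simp [inrCLM]
  have hinner : HasFDerivAt (fun y' : Fin d → ℝ => Sum.elim ξ y') (inrCLM d) y := by
    rw [hfe]; exact h1
  have hcomp := (hasFDerivAt_mvpoly_eval u (Sum.elim ξ y)).comp y hinner
  simp only [Function.comp_def] at hcomp
  rw [gradSnd]; unfold polyFun; rw [hcomp.fderiv]
  have hv : inrCLM d (Pi.single i 1) = Sum.elim (0 : Fin d → ℝ) (Pi.single i 1) := rfl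
  simp only [ContinuousLinearMap.coe_comp', Function.comp_apply, hv, evalGradCLM_apply]
  rw [Fintype.sum_sum_type]
  simp [Pi.single_apply, Finset.sum_ite_eq']

/-! ### Algebraic operators -/

def wN : (Fin d ⊕ Fin d) → ℕ := Sum.elim (fun _ => 1) (fun _ => 2)

def wt (s : (Fin d ⊕ Fin d) →₀ ℕ) : ℕ := s.sum fun j k => wN j * k

/-- values of the drift derivation on the variables -/
def fE (d : ℕ) : (Fin d ⊕ Fin d) → Rd d :=
  Sum.elim (fun i => -(X (Sum.inl i) + X (Sum.inr i)))
    (fun i => (6:ℝ) • X (Sum.inl i) + (4:ℝ) • X (Sum.inr i))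

/-- values of the diagonalized derivation on the variables -/
def fD (d : ℕ) : (Fin d ⊕ Fin d) → Rd d := fun j => (wN j : ℝ) • X j

/-- the differential operator, on polynomials -/
def Tpoly (u : Rd d) : Rd d := u + mkDerivation ℝ (fE d) u

/-- the diagonalized operator -/
def Tdiag (v : Rd d) : Rd d := v + mkDerivation ℝ (fD d) v

def σf (d : ℕ) : (Fin d ⊕ Fin d) → Rd d :=
  Sum.elim (fun i => (3:ℝ) • X (Sum.inl i) + (1:ℝ) • X (Sum.inr i))
    (fun i => (2:ℝ) • X (Sum.inl i) + (1:ℝ) • X (Sum.inr i))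

def τf (d : ℕ) : (Fin d ⊕ Fin d) → Rd d :=
  Sum.elim (fun i => (1:ℝ) • X (Sum.inl i) + (-1:ℝ) • X (Sum.inr i))
    (fun i => (-2:ℝ) • X (Sum.inl i) + (3:ℝ) • X (Sum.inr i))

def ΦA (d : ℕ) : Rd d ≃ₐ[ℝ] Rd d :=
  AlgEquiv.ofAlgHom (aeval (σf d)) (aeval (τf d))
    (by
      apply MvPolynomial.algHom_ext
      rintro (i | i) <;>
        simp [σf, τf, map_add, map_sub, map_smul] <;> module)
    (by
      apply MvPolynomial.algHom_ext
      rintro (i | i) <;>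
        simp [σf, τf, map_add, map_sub, map_smul] <;> module)

lemma ΦA_apply (p : Rd d) : ΦA d p = aeval (σf d) p := rfl
lemma ΦA_symm_apply (p : Rd d) : (ΦA d).symm p = aeval (τf d) p := rfl

/-- conjugated derivation -/
def conjDer (Φ : Rd d ≃ₐ[ℝ] Rd d) (D : Derivation ℝ (Rd d) (Rd d)) :
    Derivation ℝ (Rd d) (Rd d) where
  toLinearMap := Φ.symm.toLinearMap ∘ₗ D.toLinearMap ∘ₗ Φ.toLinearMap
  map_one_eq_zero' := by simp
  leibniz' a b := by
    dsimp only [LinearMap.coe_comp, Function.comp_apply, AlgEquiv.toLinearMap_apply,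
      Derivation.coeFn_coe]
    rw [map_mul, Derivation.leibniz, smul_eq_mul, smul_eq_mul, map_add, map_mul, map_mul,
      AlgEquiv.symm_apply_apply, AlgEquiv.symm_apply_apply, smul_eq_mul, smul_eq_mul]

lemma conjDer_apply (Φ : Rd d ≃ₐ[ℝ] Rd d) (D : Derivation ℝ (Rd d) (Rd d)) (p : Rd d) :
    conjDer Φ D p = Φ.symm (D (Φ p)) := rfl

lemma conj_eq (d : ℕ) :
    conjDer (ΦA d) (mkDerivation ℝ (fE d)) = mkDerivation ℝ (fD d) := by
  apply MvPolynomial.derivation_ext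
  rintro (i | i)
  · rw [conjDer_apply, ΦA_apply, aeval_X, mkDerivation_X]
    have h1 : mkDerivation ℝ (fE d) (σf d (Sum.inl i)) = σf d (Sum.inl i) := by
      simp only [σf, fE, Sum.elim_inl, Sum.elim_inr, map_add, Derivation.map_smul,
        mkDerivation_X]
      module
    rw [h1, show σf d (Sum.inl i) = ΦA d (X (Sum.inl i)) from (aeval_X _ _).symm,
      AlgEquiv.symm_apply_apply]
    simp [fD, wN]
  · rw [conjDer_apply, ΦA_apply, aeval_X, mkDerivation_X]
    have h1 : mkDerivation ℝ (fE d) (σf d (Sum.inr i)) = (2:ℝ) • σf d (Sum.inr i) := by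
      simp only [σf, fE, Sum.elim_inl, Sum.elim_inr, map_add, Derivation.map_smul,
        mkDerivation_X]
      module
    rw [h1, show σf d (Sum.inr i) = ΦA d (X (Sum.inr i)) from (aeval_X _ _).symm,
      map_smul, AlgEquiv.symm_apply_apply]
    simp [fD, wN]

lemma Tpoly_conj (v : Rd d) : Tpoly (ΦA d v) = ΦA d (Tdiag v) := by
  have h := congrArg (fun D : Derivation ℝ (Rd d) (Rd d) => D v) (conj_eq d)
  simp only [conjDer_apply] at h
  have h2 : mkDerivation ℝ (fE d) (ΦA d v) = ΦA d (mkDerivation ℝ (fD d) v) := by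
    rw [← h, AlgEquiv.apply_symm_apply]
  rw [Tpoly, Tdiag, map_add, h2]

/-! ### The diagonal operator is invertible -/

lemma Tdiag_add (p q : Rd d) : Tdiag (p + q) = Tdiag p + Tdiag q := by
  simp only [Tdiag, map_add]; abel

lemma single_add_sub {j : Fin d ⊕ Fin d} {s : (Fin d ⊕ Fin d) →₀ ℕ} (h : s j ≠ 0) :
    (s - Finsupp.single j 1) + Finsupp.single j 1 = s := by
  ext a
  rcases eq_or_ne a j with rfl | ha
  · simp [Finsupp.single_apply]
    omega
  · simp [Finsupp.single_apply, Ne.symm ha]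

lemma Tdiag_monomial (s : (Fin d ⊕ Fin d) →₀ ℕ) (r : ℝ) :
    Tdiag (monomial s r) = monomial s ((1 + (wt s : ℝ)) * r) := by
  have hterm : ∀ j ∈ s.support,
      monomial (s - Finsupp.single j 1) ((s j : ℝ)) • fD d j
        = monomial s ((wN j : ℝ) * s j) := by
    intro j hj
    have hjs : s j ≠ 0 := Finsupp.mem_support_iff.mp hj
    rw [fD, smul_comm, smul_eq_mul, X, monomial_mul, single_add_sub hjs, mul_one]
    rw [smul_monomial, smul_eq_mul]
  rw [Tdiag, mkDerivation_monomial, Finsupp.sum, Finset.sum_congr rfl hterm,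
    ← map_sum (monomial s), smul_monomial, ← map_add]
  congr 1
  have : (wt s : ℝ) = ∑ x ∈ s.support, (wN x : ℝ) * (s x : ℝ) := by
    rw [wt, Finsupp.sum]
    push_cast
    rfl
  rw [this, smul_eq_mul]
  ring

lemma one_add_wt_ne (s : (Fin d ⊕ Fin d) →₀ ℕ) : (1 + (wt s : ℝ)) ≠ 0 := by
  positivity

lemma coeff_Tdiag (α : (Fin d ⊕ Fin d) →₀ ℕ) (v : Rd d) :
    coeff α (Tdiag v) = (1 + (wt α : ℝ)) * coeff α v := by
  induction v using MvPolynomial.induction_on' with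
  | monomial s r =>
      rw [Tdiag_monomial, coeff_monomial, coeff_monomial]
      rcases eq_or_ne s α with rfl | h
      · simp
      · simp [h]
  | add p q hp hq =>
      rw [Tdiag_add, coeff_add, hp, hq, coeff_add]
      ring

lemma Tdiag_injective : Function.Injective (Tdiag (d := d)) := by
  intro v v' h
  apply MvPolynomial.ext
  intro α
  have := congrArg (coeff α) h
  rw [coeff_Tdiag, coeff_Tdiag] at this
  exact mul_left_cancel₀ (one_add_wt_ne α) this

def Ninv (P : Rd d) : Rd d :=
  ∑ α ∈ P.support, monomial α ((1 + (wt α : ℝ))⁻¹ * coeff α P)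

lemma coeff_Ninv (α : (Fin d ⊕ Fin d) →₀ ℕ) (P : Rd d) :
    coeff α (Ninv P) = (1 + (wt α : ℝ))⁻¹ * coeff α P := by
  rw [Ninv, coeff_sum]
  rcases em (α ∈ P.support) with h | h
  · rw [Finset.sum_eq_single α (fun β _ hβ => by rw [coeff_monomial]; simp [hβ])
      (fun hα => absurd h hα)]
    simp [coeff_monomial]
  · have h0 : coeff α P = 0 := of_not_not (mt MvPolynomial.mem_support_iff.mpr h)
    rw [h0, mul_zero]
    apply Finset.sum_eq_zero
    intro β hβ
    rw [coeff_monomial]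
    have : β ≠ α := fun he => h (he ▸ hβ)
    simp [this]

lemma Tdiag_Ninv (P : Rd d) : Tdiag (Ninv P) = P := by
  apply MvPolynomial.ext
  intro α
  rw [coeff_Tdiag, coeff_Ninv, ← mul_assoc, mul_inv_cancel₀ (one_add_wt_ne α), one_mul]

lemma deg_Ninv (P : Rd d) : (Ninv P).totalDegree ≤ P.totalDegree := by
  apply totalDegree_le_of_support_subset
  intro α hα
  rw [MvPolynomial.mem_support_iff] at hα ⊢
  intro h0
  rw [coeff_Ninv, h0, mul_zero] at hα
  exact hα rfl

/-! ### Degree bounds for linear substitution -/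

lemma totalDegree_aeval_le (g : (Fin d ⊕ Fin d) → Rd d) (hg : ∀ j, (g j).totalDegree ≤ 1)
    (p : Rd d) : (aeval g p).totalDegree ≤ p.totalDegree := by
  conv_lhs => rw [p.as_sum, map_sum]
  apply totalDegree_finsetSum_le
  intro α hα
  rw [aeval_monomial]
  calc (algebraMap ℝ (Rd d) (coeff α p) * α.prod fun j n => g j ^ n).totalDegree
      ≤ (algebraMap ℝ (Rd d) (coeff α p)).totalDegree
        + (α.prod fun j n => g j ^ n).totalDegree := totalDegree_mul _ _
    _ = (α.prod fun j n => g j ^ n).totalDegree := by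
        rw [MvPolynomial.algebraMap_eq, totalDegree_C, zero_add]
    _ ≤ ∑ j ∈ α.support, ((g j ^ α j).totalDegree) := by
        rw [Finsupp.prod]
        exact totalDegree_finset_prod _ _
    _ ≤ ∑ j ∈ α.support, α j := by
        apply Finset.sum_le_sum
        intro j _
        calc (g j ^ α j).totalDegree ≤ α j * (g j).totalDegree := totalDegree_pow _ _
          _ ≤ α j * 1 := Nat.mul_le_mul_left _ (hg j)
          _ = α j := Nat.mul_one _
    _ ≤ p.totalDegree := le_totalDegree hα

lemma deg_linear (a b : ℝ) (u v : Fin d ⊕ Fin d) :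
    ((a • X u + b • X v : Rd d)).totalDegree ≤ 1 := by
  apply le_trans (totalDegree_add _ _)
  apply max_le <;>
    exact le_trans (totalDegree_smul_le _ _) (le_of_eq (totalDegree_X _))

lemma deg_σf (j : Fin d ⊕ Fin d) : (σf d j).totalDegree ≤ 1 := by
  rcases j with i | i <;> exact deg_linear _ _ _ _

lemma deg_τf (j : Fin d ⊕ Fin d) : (τf d j).totalDegree ≤ 1 := by
  rcases j with i | i <;> exact deg_linear _ _ _ _

/-! ### The pointwise identity -/

lemma eval_Tpoly (u : Rd d) (ξ y : Fin d → ℝ) :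
    polyFun u ξ y - ∑ i, (ξ i + y i) * gradFst (polyFun u) ξ y i
        + ∑ i, (6 * ξ i + 4 * y i) * gradSnd (polyFun u) ξ y i
      = polyFun (Tpoly u) ξ y := by
  set x := Sum.elim ξ y with hx
  have hF : ∀ i, gradFst (polyFun u) ξ y i
      = MvPolynomial.eval x (pderiv (Sum.inl i) u) := fun i => gradFst_polyFun u ξ y i
  have hS : ∀ i, gradSnd (polyFun u) ξ y i
      = MvPolynomial.eval x (pderiv (Sum.inr i) u) := fun i => gradSnd_polyFun u ξ y i
  simp only [hF, hS]
  unfold polyFun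
  rw [Tpoly, map_add, mkDerivation_eq_sum, map_sum, Fintype.sum_sum_type]
  have hl : ∀ i : Fin d, MvPolynomial.eval x (fE d (Sum.inl i) * pderiv (Sum.inl i) u)
      = -(ξ i + y i) * MvPolynomial.eval x (pderiv (Sum.inl i) u) := by
    intro i
    rw [map_mul]
    congr 1
    simp [fE, hx]
  have hr : ∀ i : Fin d, MvPolynomial.eval x (fE d (Sum.inr i) * pderiv (Sum.inr i) u)
      = (6 * ξ i + 4 * y i) * MvPolynomial.eval x (pderiv (Sum.inr i) u) := by
    intro i
    rw [map_mul]
    congr 1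
    simp [fE, hx, smul_eval]
  rw [Finset.sum_congr rfl fun i _ => hl i, Finset.sum_congr rfl fun i _ => hr i]
  have : ∑ i : Fin d, -(ξ i + y i) * MvPolynomial.eval x (pderiv (Sum.inl i) u)
      = -∑ i : Fin d, (ξ i + y i) * MvPolynomial.eval x (pderiv (Sum.inl i) u) := by
    rw [← Finset.sum_neg_distrib]
    exact Finset.sum_congr rfl fun i _ => by ring
  rw [this]
  ring

end Stmt12Aux

end Stmt12Aux

open Stmt12Aux

/-- paper's equation (3.17a) and its analogue for the amplitude:
for every polynomial function `P` on `ℝ^d × ℝ^d` there exists a unique polynomial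
function `u`, of degree at most the degree of `P`, with
`u − ⟨ξ + y, ∇_ξu⟩ + ⟨6ξ + 4y, ∇_yu⟩ = P` everywhere. -/
theorem stmt12 (d : ℕ) (hd : 1 ≤ d) (P : MvPolynomial (Fin d ⊕ Fin d) ℝ) :
    ∃! u : MvPolynomial (Fin d ⊕ Fin d) ℝ,
      u.totalDegree ≤ P.totalDegree ∧
        ∀ ξ y : Fin d → ℝ,
          polyFun u ξ y - ∑ i, (ξ i + y i) * gradFst (polyFun u) ξ y i
              + ∑ i, (6 * ξ i + 4 * y i) * gradSnd (polyFun u) ξ y i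
            = polyFun P ξ y := by
  classical
  set v0 : Rd d := (ΦA d).symm P with hv0
  refine ⟨ΦA d (Ninv v0), ⟨?_, ?_⟩, ?_⟩
  · calc (ΦA d (Ninv v0)).totalDegree ≤ (Ninv v0).totalDegree := by
          rw [ΦA_apply]; exact totalDegree_aeval_le _ deg_σf _
      _ ≤ v0.totalDegree := deg_Ninv _
      _ ≤ P.totalDegree := by
          rw [hv0, ΦA_symm_apply]; exact totalDegree_aeval_le _ deg_τf _
  · intro ξ y
    rw [eval_Tpoly, Tpoly_conj, Tdiag_Ninv, hv0, AlgEquiv.apply_symm_apply]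
  · intro u' hu'
    have hpt : ∀ x : (Fin d ⊕ Fin d) → ℝ,
        MvPolynomial.eval x (Tpoly u') = MvPolynomial.eval x P := by
      intro x
      have hx : Sum.elim (x ∘ Sum.inl) (x ∘ Sum.inr) = x := by
        funext j; cases j <;> rfl
      have h := hu'.2 (x ∘ Sum.inl) (x ∘ Sum.inr)
      rw [eval_Tpoly] at h
      unfold polyFun at h
      rwa [hx] at h
    have hTeq : Tpoly u' = P := MvPolynomial.funext hpt
    have h1 : Tpoly (ΦA d ((ΦA d).symm u')) = P := by
      rwa [AlgEquiv.apply_symm_apply]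
    rw [Tpoly_conj] at h1
    have h2 : Tdiag ((ΦA d).symm u') = v0 := by
      have := congrArg (ΦA d).symm h1
      rwa [AlgEquiv.symm_apply_apply, ← hv0] at this
    have h3 : (ΦA d).symm u' = Ninv v0 := Tdiag_injective (by rw [h2, Tdiag_Ninv])
    calc u' = ΦA d ((ΦA d).symm u') := (AlgEquiv.apply_symm_apply _ _).symm
      _ = ΦA d (Ninv v0) := by rw [h3]
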